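/- Let p > 2 and q be its Hölder conjugate (1/p + 1/q = 1). There exists a constant c = c(p) > 0 such that for all t ≥ 1 and all β ∈ ℝ, ∫_0^∞ e^{−√3·t·v²}·v^{1/p − 1/2}·|v − β|^{1/q − 1} dv ≤ c·t^{−1/4}. -/

import Mathlib

/-!
With `a = 1/p ∈ (0, 1/2)` we have `1/q - 1 = -a`, and weighted AM–GM with weights `1 - 2a`, `2a`
gives `v^(a-1/2) |v-β|^(-a) ≤ (1-2a) v^(-1/2) + 2a |v-β|^(-1/2)`. So it suffices to bound
`∫ e^(-b v²) |v-β|^(-1/2) dv` by `C b^(-1/4)` uniformly in `β`. Split at `|v-β| = b^(-1/2)`: the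
singular part integrates to `4 b^(-1/4)`, and away from it `|v-β|^(-1/2) ≤ b^(1/4)` while the
Gaussian integrates to `√(π/b)`.
-/

open MeasureTheory Real Set

lemma integral_indicator_Iic_rpow_abs {r s : ℝ} (hr : 0 ≤ r) (hs : -1 < s) :
    ∫ x, (Iic r).indicator (· ^ s) |x| = 2 * (r ^ (s + 1) / (s + 1)) := by
  rw [integral_comp_abs (f := (Iic r).indicator (· ^ s)), setIntegral_indicator measurableSet_Iic,
    Ioi_inter_Iic, ← intervalIntegral.integral_of_le hr, integral_rpow (Or.inl hs),
    zero_rpow (by linarith), sub_zero]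

lemma integrable_indicator_Iic_rpow_abs {r s : ℝ} (hr : 0 < r) (hs : -1 < s) :
    Integrable fun x => (Iic r).indicator (· ^ s) |x| := by
  -- a non-integrable function has integral `0`
  refine Integrable.of_integral_ne_zero ?_
  rw [integral_indicator_Iic_rpow_abs hr.le hs]
  have : 0 < r ^ (s + 1) / (s + 1) := div_pos (rpow_pos_of_pos hr _) (by linarith)
  positivity

lemma exp_neg_mul_sq_mul_abs_rpow_le {b r s : ℝ} (hb : 0 ≤ b) (hr : 0 < r) (hs : s ≤ 0)
    (v x : ℝ) :
    exp (-b * v ^ 2) * |x| ^ s ≤ (Iic r).indicator (· ^ s) |x| + r ^ s * exp (-b * v ^ 2) := by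
  have hexp : exp (-b * v ^ 2) ≤ 1 := exp_le_one_iff.2 (by nlinarith [sq_nonneg v])
  by_cases hx : |x| ≤ r
  · rw [indicator_of_mem (show |x| ∈ Iic r from hx)]
    have : 0 ≤ r ^ s * exp (-b * v ^ 2) := by positivity
    nlinarith [rpow_nonneg (abs_nonneg x) s]
  · rw [indicator_of_notMem (show |x| ∉ Iic r from hx), zero_add, mul_comm]
    exact mul_le_mul_of_nonneg_right (rpow_le_rpow_of_nonpos hr (le_of_not_ge hx) hs)
      (exp_nonneg _)

section GaussianSingularity

variable {b s : ℝ}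

lemma integrable_exp_neg_mul_sq_mul_abs_sub_rpow (hb : 0 < b) (hs : -1 < s) (hs0 : s ≤ 0)
    (β : ℝ) : Integrable fun v => exp (-b * v ^ 2) * |v - β| ^ s := by
  refine Integrable.mono' (((integrable_indicator_Iic_rpow_abs one_pos hs).comp_sub_right β).add
    ((integrable_exp_neg_mul_sq hb).const_mul ((1 : ℝ) ^ s))) (by fun_prop)
    (.of_forall fun v => ?_)
  rw [Real.norm_of_nonneg (by positivity)]
  exact exp_neg_mul_sq_mul_abs_rpow_le hb.le one_pos hs0 v (v - β)

lemma integral_exp_neg_mul_sq_mul_abs_sub_rpow_le (hb : 0 < b) (hs : -1 < s) (hs0 : s ≤ 0)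
    (β : ℝ) :
    ∫ v, exp (-b * v ^ 2) * |v - β| ^ s ≤ (2 / (s + 1) + √π) * b ^ (-(s + 1) / 2) := by
  set r := b ^ (-(1 / 2) : ℝ)
  have hr : 0 < r := rpow_pos_of_pos hb _
  have hind := (integrable_indicator_Iic_rpow_abs hr hs).comp_sub_right β
  have hgauss := (integrable_exp_neg_mul_sq hb).const_mul (r ^ s)
  calc ∫ v, exp (-b * v ^ 2) * |v - β| ^ s
      ≤ ∫ v, ((Iic r).indicator (· ^ s) |v - β| + r ^ s * exp (-b * v ^ 2)) :=
        integral_mono (integrable_exp_neg_mul_sq_mul_abs_sub_rpow hb hs hs0 β) (hind.add hgauss)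
          fun v => exp_neg_mul_sq_mul_abs_rpow_le hb.le hr hs0 v (v - β)
    _ = 2 * (r ^ (s + 1) / (s + 1)) + r ^ s * √(π / b) := by
        rw [integral_add hind hgauss,
          integral_sub_right_eq_self (fun x => (Iic r).indicator (· ^ s) |x|),
          integral_indicator_Iic_rpow_abs hr.le hs, integral_const_mul, integral_gaussian]
    _ = (2 / (s + 1) + √π) * b ^ (-(s + 1) / 2) := by
        rw [sqrt_div' _ hb.le, sqrt_eq_rpow b, ← rpow_mul hb.le, ← rpow_mul hb.le,
          div_eq_mul_inv (√π), ← rpow_neg hb.le, mul_left_comm, ← rpow_add hb]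
        ring_nf

end GaussianSingularity

lemma rpow_mul_abs_sub_rpow_neg_le {a v β : ℝ} (ha : 0 ≤ a) (ha' : a ≤ 1 / 2) (hv : 0 ≤ v) :
    v ^ (a - 1 / 2) * |v - β| ^ (-a) ≤
      (1 - 2 * a) * v ^ (-(1 / 2) : ℝ) + 2 * a * |v - β| ^ (-(1 / 2) : ℝ) := by
  have h := geom_mean_le_arith_mean2_weighted (by linarith) (by linarith)
    (rpow_nonneg hv (-(1 / 2))) (rpow_nonneg (abs_nonneg (v - β)) (-(1 / 2)))
    (show 1 - 2 * a + 2 * a = 1 by ring)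
  rwa [← rpow_mul hv, ← rpow_mul (abs_nonneg _), show -(1 / 2) * (1 - 2 * a) = a - 1 / 2 by ring,
    show -(1 / 2) * (2 * a) = -a by ring] at h

lemma setIntegral_Ioi_exp_neg_mul_sq_mul_rpow_mul_abs_sub_rpow_le {a b : ℝ} (ha : 0 ≤ a)
    (ha' : a ≤ 1 / 2) (hb : 0 < b) (β : ℝ) :
    ∫ v in Ioi 0, exp (-b * v ^ 2) * v ^ (a - 1 / 2) * |v - β| ^ (-a) ≤
      (4 + √π) * b ^ (-(1 / 4) : ℝ) := by
  set G : ℝ → ℝ → ℝ := fun γ v => exp (-b * v ^ 2) * |v - γ| ^ (-(1 / 2) : ℝ)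
  have hGint (γ : ℝ) : Integrable (G γ) :=
    integrable_exp_neg_mul_sq_mul_abs_sub_rpow hb (by norm_num) (by norm_num) γ
  have hGle (γ : ℝ) : ∫ v in Ioi 0, G γ v ≤ (4 + √π) * b ^ (-(1 / 4) : ℝ) := by
    refine (setIntegral_le_integral (hGint γ) (.of_forall fun v => by positivity)).trans ?_
    refine (integral_exp_neg_mul_sq_mul_abs_sub_rpow_le hb (s := -(1 / 2)) (by norm_num)
      (by norm_num) γ).trans_eq ?_
    norm_num
  calc _ ≤ ∫ v in Ioi 0, ((1 - 2 * a) * G 0 v + 2 * a * G β v) := by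
        refine integral_mono_of_nonneg ?_
          (((hGint 0).const_mul _).add ((hGint β).const_mul _)).integrableOn ?_
        all_goals filter_upwards [ae_restrict_mem measurableSet_Ioi] with v (hv : 0 < v)
        · positivity
        · have := mul_le_mul_of_nonneg_left (rpow_mul_abs_sub_rpow_neg_le (β := β) ha ha' hv.le)
            (exp_nonneg (-b * v ^ 2))
          simp only [G, sub_zero, abs_of_pos hv]
          linarith
    _ = (1 - 2 * a) * (∫ v in Ioi 0, G 0 v) + 2 * a * ∫ v in Ioi 0, G β v := by
        rw [integral_add ((hGint 0).integrableOn.const_mul _) ((hGint β).integrableOn.const_mul _),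
          integral_const_mul, integral_const_mul]
    _ ≤ (1 - 2 * a) * ((4 + √π) * b ^ (-(1 / 4) : ℝ)) +
          2 * a * ((4 + √π) * b ^ (-(1 / 4) : ℝ)) := by
        gcongr
        · linarith
        · exact hGle 0
        · exact hGle β
    _ = (4 + √π) * b ^ (-(1 / 4) : ℝ) := by ring

/-- for Hölder conjugate exponents p > 2 and q, a uniform bound
    ∫₀^∞ e^{−√3 t v²} v^{1/p−1/2}|v−β|^{1/q−1} dv ≤ c t^{−1/4}. -/
theorem ov_gaussian_hoelder_integral (p q : ℝ) (hp : 2 < p)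
    (hpq : 1 / p + 1 / q = 1) :
    ∃ c : ℝ, 0 < c ∧ ∀ t : ℝ, 1 ≤ t → ∀ β : ℝ,
      (∫ v in Set.Ioi (0 : ℝ),
          Real.exp (-(Real.sqrt 3) * t * v ^ 2) * v ^ (1 / p - 1 / 2) *
            |v - β| ^ (1 / q - 1))
        ≤ c * t ^ (-(1 / 4 : ℝ)) := by
  have ha : 1 / p ≤ 1 / 2 := one_div_le_one_div_of_le two_pos hp.le
  have hq : 1 / q - 1 = -(1 / p) := by linarith
  refine ⟨4 + √π, by positivity, fun t ht β => ?_⟩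
  have ht0 : 0 < t := by linarith
  have hsqrt3 : t ≤ √3 * t := le_mul_of_one_le_left ht0.le (Real.one_le_sqrt.2 (by norm_num))
  calc _ = ∫ v in Ioi 0,
        exp (-(√3 * t) * v ^ 2) * v ^ (1 / p - 1 / 2) * |v - β| ^ (-(1 / p)) := by
        rw [hq, neg_mul (√3) t]
    _ ≤ (4 + √π) * (√3 * t) ^ (-(1 / 4) : ℝ) :=
        setIntegral_Ioi_exp_neg_mul_sq_mul_rpow_mul_abs_sub_rpow_le (by positivity) ha
          (by positivity) β
    _ ≤ (4 + √π) * t ^ (-(1 / 4) : ℝ) := by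
        gcongr _ * ?_
        exact rpow_le_rpow_of_nonpos ht0 hsqrt3 (by norm_num)
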